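/- Let K ⊂ ℂ be a compact set. Then for every μ ∈ ℳ(K), log W̄(μ) ≤ −(1/2)·I(μ); in particular, if I(μ) = +∞ then W̄(μ) = 0. -/

import Mathlib

open MeasureTheory Filter Topology ENNReal

noncomputable section

/-- `|VDM_k(x)| = ∏_{1 ≤ i < j ≤ k+1} |x_i - x_j|`, the modulus of the classical Vandermonde
determinant of `N_k = k+1` points of `K ⊂ ℂ`. -/
def absVdm1 (k : ℕ) {K : Set ℂ} (x : Fin (k + 1) → ↥K) : ℝ :=
  ∏ i : Fin (k + 1), ∏ j ∈ Finset.Ioi i, ‖(x j : ℂ) - (x i : ℂ)‖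

/-- `|VDM_k^Q(x)| = |VDM_k(x)| e^{-kQ(x_1)} ⋯ e^{-kQ(x_{k+1})}`. -/
def absVdm1W (k : ℕ) {K : Set ℂ} (Q : ↥K → ℝ) (x : Fin (k + 1) → ↥K) : ℝ :=
  absVdm1 k x * ∏ β, Real.exp (-(k : ℝ) * Q (x β))

/-- The empirical measure `(1/N_k) ∑_{j=1}^{k+1} δ_{x_j}` of a tuple of points of `K`. -/
def emp1 {k : ℕ} {K : Set ℂ} (x : Fin (k + 1) → ↥K) : Measure ↥K :=
  ((k + 1 : ℕ) : ℝ≥0∞)⁻¹ • ∑ β : Fin (k + 1), Measure.dirac (x β)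

lemma emp1_isProb {k : ℕ} {K : Set ℂ} (x : Fin (k + 1) → ↥K) :
    IsProbabilityMeasure (emp1 x) := by
  constructor
  simp only [emp1, Measure.smul_apply, Measure.finset_sum_apply,
    Measure.dirac_apply_of_mem (Set.mem_univ _), Finset.sum_const, Finset.card_univ,
    Fintype.card_fin, nsmul_eq_mul, mul_one, smul_eq_mul]
  exact ENNReal.inv_mul_cancel (by exact_mod_cast Nat.succ_ne_zero k) (by simp)

/-- The empirical measure as an element of `ℳ(K)`. -/
def empP1 {k : ℕ} {K : Set ℂ} (x : Fin (k + 1) → ↥K) : ProbabilityMeasure ↥K :=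
  ⟨emp1 x, emp1_isProb x⟩

/-- `W_k^Q(G)`. -/
def Wk1 (k : ℕ) {K : Set ℂ} (Q : ↥K → ℝ) (G : Set (ProbabilityMeasure ↥K)) : ℝ :=
  sSup ((fun x : Fin (k + 1) → ↥K =>
    (absVdm1W k Q x) ^ ((1 : ℝ) / ((k * (k + 1) : ℕ) : ℝ))) '' {x | empP1 x ∈ G})

/-- `W̄^Q(μ)`. -/
def Wbar1Q {K : Set ℂ} (Q : ↥K → ℝ) (μ : ProbabilityMeasure ↥K) : ℝ :=
  ⨅ G : {G : Set (ProbabilityMeasure ↥K) // IsOpen G ∧ μ ∈ G},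
    Filter.limsup (fun k : ℕ => Wk1 k Q G.1) atTop

/-- `W̲^Q(μ)`. -/
def Wlow1Q {K : Set ℂ} (Q : ↥K → ℝ) (μ : ProbabilityMeasure ↥K) : ℝ :=
  ⨅ G : {G : Set (ProbabilityMeasure ↥K) // IsOpen G ∧ μ ∈ G},
    Filter.liminf (fun k : ℕ => Wk1 k Q G.1) atTop

/-- `W̄(μ)`. -/
def Wbar1 {K : Set ℂ} (μ : ProbabilityMeasure ↥K) : ℝ := Wbar1Q (fun _ => 0) μ

/-- `W̲(μ)`. -/
def Wlow1 {K : Set ℂ} (μ : ProbabilityMeasure ↥K) : ℝ := Wlow1Q (fun _ => 0) μ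

/-- `J_k^Q(G)`, defined with respect to the measure `ν` on `K`. -/
def Jk1 (k : ℕ) {K : Set ℂ} (ν : Measure ↥K) (Q : ↥K → ℝ)
    (G : Set (ProbabilityMeasure ↥K)) : ℝ :=
  (∫ x in {x : Fin (k + 1) → ↥K | empP1 x ∈ G}, (absVdm1W k Q x) ^ 2
      ∂(Measure.pi fun _ : Fin (k + 1) => ν)) ^ ((1 : ℝ) / ((2 * k * (k + 1) : ℕ) : ℝ))

/-- `J̄^Q(μ)`. -/
def Jbar1Q {K : Set ℂ} (ν : Measure ↥K) (Q : ↥K → ℝ) (μ : ProbabilityMeasure ↥K) : ℝ :=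
  ⨅ G : {G : Set (ProbabilityMeasure ↥K) // IsOpen G ∧ μ ∈ G},
    Filter.limsup (fun k : ℕ => Jk1 k ν Q G.1) atTop

/-- `J̲^Q(μ)`. -/
def Jlow1Q {K : Set ℂ} (ν : Measure ↥K) (Q : ↥K → ℝ) (μ : ProbabilityMeasure ↥K) : ℝ :=
  ⨅ G : {G : Set (ProbabilityMeasure ↥K) // IsOpen G ∧ μ ∈ G},
    Filter.liminf (fun k : ℕ => Jk1 k ν Q G.1) atTop

/-- `J̄(μ)`. -/
def Jbar1 {K : Set ℂ} (ν : Measure ↥K) (μ : ProbabilityMeasure ↥K) : ℝ :=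
  Jbar1Q ν (fun _ => 0) μ

/-- `J̲(μ)`. -/
def Jlow1 {K : Set ℂ} (ν : Measure ↥K) (μ : ProbabilityMeasure ↥K) : ℝ :=
  Jlow1Q ν (fun _ => 0) μ

/-- The logarithmic kernel `log (1/|z - w|)`. -/
def logKer (z w : ℂ) : ℝ := Real.log (1 / ‖z - w‖)

/-- The positive part `max (log (1/|z-w|)) 0` of the logarithmic kernel, as an extended
nonnegative real (equal to `+∞` on the diagonal `z = w`). -/
def posKer (z w : ℂ) : ℝ≥0∞ := if z = w then ⊤ else ENNReal.ofReal (logKer z w)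

/-- The logarithmic energy `I(μ) = ∫∫ log (1/|z-ζ|) dμ(ζ) dμ(z) ∈ (-∞, +∞]`, defined as an
extended real number: the integral of the positive part of the kernel (which may be `+∞`)
minus the integral of the negative part (which is finite on a compact set, the kernel being
bounded below there). -/
def energyE {K : Set ℂ} (μ : Measure ↥K) : EReal :=
  ((∫⁻ p : ↥K × ↥K, posKer (p.1 : ℂ) (p.2 : ℂ) ∂(μ.prod μ) : ℝ≥0∞) : EReal) -
    ((∫⁻ p : ↥K × ↥K, ENNReal.ofReal (-logKer (p.1 : ℂ) (p.2 : ℂ)) ∂(μ.prod μ) : ℝ≥0∞) : EReal)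

/-- `log : [0,∞) → [-∞,∞)` with `log 0 = -∞`. -/
def elog (x : ℝ) : EReal := if x ≤ 0 then ⊥ else ((Real.log x : ℝ) : EReal)

/-- The weighted Bernstein–Markov property for the triple `(K, ν, Q)`, `K ⊂ ℂ`. -/
def WBM1 {K : Set ℂ} (ν : Measure ↥K) (Q : ↥K → ℝ) : Prop :=
  ∃ M : ℕ → ℝ, (∀ k, 0 < M k) ∧
    Filter.limsup (fun k : ℕ => (M k) ^ ((1 : ℝ) / (k : ℝ))) atTop = 1 ∧
    ∀ (k : ℕ) (p : Polynomial ℂ), p.natDegree ≤ k → ∀ z : ↥K,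
      Real.exp (-(k : ℝ) * Q z) * ‖Polynomial.eval (z : ℂ) p‖ ≤
        M k * (∫ w : ↥K,
            (Real.exp (-(k : ℝ) * Q w) * ‖Polynomial.eval (w : ℂ) p‖) ^ 2
          ∂ν) ^ ((1 : ℝ) / 2)

/-- `ν` is a strong Bernstein–Markov measure for `K ⊂ ℂ`. -/
def StrongBM1 {K : Set ℂ} (ν : Measure ↥K) : Prop :=
  ∀ Q : ↥K → ℝ, Continuous Q → WBM1 ν Q

/-- `Z_k = Z_k(K, Q, ν)`. -/
def Zk1 (k : ℕ) {K : Set ℂ} (ν : Measure ↥K) (Q : ↥K → ℝ) : ℝ :=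
  ∫ x : Fin (k + 1) → ↥K, (absVdm1W k Q x) ^ 2 ∂(Measure.pi fun _ : Fin (k + 1) => ν)

/-- `Prob_k`, the probability measure on `K^{N_k}` with density `|VDM_k^Q|²/Z_k`
with respect to `ν^{⊗N_k}`. -/
def Prob1k (k : ℕ) {K : Set ℂ} (ν : Measure ↥K) (Q : ↥K → ℝ) :
    Measure (Fin (k + 1) → ↥K) :=
  (Measure.pi fun _ : Fin (k + 1) => ν).withDensity
    (fun x => ENNReal.ofReal ((absVdm1W k Q x) ^ 2 / Zk1 k ν Q))

/-- `σ_k = (j_k)_* Prob_k` as a set function: `σ_k(Γ) = Prob_k(j_k^{-1}(Γ))`. -/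
def sig1k (k : ℕ) {K : Set ℂ} (ν : Measure ↥K) (Q : ↥K → ℝ)
    (Γ : Set (ProbabilityMeasure ↥K)) : ℝ≥0∞ :=
  Prob1k k ν Q {x | empP1 x ∈ Γ}


section AuxSW
open BoundedContinuousFunction

variable {X : Type*} [MetricSpace X] [CompactSpace X] [MeasurableSpace X] [BorelSpace X]

/-- the submonoid of separable products -/
def sepMonoid (X : Type*) [TopologicalSpace X] : Submonoid C(X × X, ℝ) where
  carrier := {h | ∃ u v : C(X, ℝ), h = u.comp (ContinuousMap.fst) * v.comp (ContinuousMap.snd)}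
  one_mem' := ⟨1, 1, by ext p; simp [ContinuousMap.comp]⟩
  mul_mem' := by
    rintro a b ⟨u, v, rfl⟩ ⟨u', v', rfl⟩
    exact ⟨u * u', v * v', by ext p; simp [ContinuousMap.comp]; ring⟩

lemma cont_int_of_mem_span (h : C(X × X, ℝ))
    (hmem : h ∈ Submodule.span ℝ ((sepMonoid X : Set C(X × X, ℝ)))) :
    Continuous (fun σ : ProbabilityMeasure X =>
      ∫ p, h p ∂((σ : Measure X).prod (σ : Measure X))) := by
  induction hmem using Submodule.span_induction with
  | mem f hf =>
      obtain ⟨u, v, rfl⟩ := hf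
      have key : ∀ σ : ProbabilityMeasure X,
          ∫ p, ((u.comp ContinuousMap.fst * v.comp ContinuousMap.snd : C(X × X, ℝ))) p
            ∂((σ : Measure X).prod (σ : Measure X))
          = (∫ x, u x ∂(σ : Measure X)) * ∫ x, v x ∂(σ : Measure X) := by
        intro σ
        simpa using integral_prod_mul (μ := (σ : Measure X)) (ν := (σ : Measure X)) u v
      simp only [key]
      exact ((ProbabilityMeasure.continuous_integral_boundedContinuousFunction
        (mkOfCompact u)).mul
        (ProbabilityMeasure.continuous_integral_boundedContinuousFunction (mkOfCompact v)))
  | zero => simpa using continuous_const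
  | add f g hf hg hcf hcg =>
      have key : ∀ σ : ProbabilityMeasure X,
          ∫ p, (f + g) p ∂((σ : Measure X).prod (σ : Measure X))
          = (∫ p, f p ∂((σ : Measure X).prod (σ : Measure X)))
            + ∫ p, g p ∂((σ : Measure X).prod (σ : Measure X)) := by
        intro σ
        simp only [ContinuousMap.add_apply]
        exact integral_add ((mkOfCompact f).integrable _) ((mkOfCompact g).integrable _)
      simp only [key]
      exact hcf.add hcg
  | smul a f hf hcf =>
      have key : ∀ σ : ProbabilityMeasure X,
          ∫ p, (a • f) p ∂((σ : Measure X).prod (σ : Measure X))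
          = a • ∫ p, f p ∂((σ : Measure X).prod (σ : Measure X)) := by
        intro σ
        simp only [ContinuousMap.smul_apply]
        exact integral_smul a _
      simp only [key]
      exact hcf.const_smul a

lemma sepMonoid_separates (X : Type*) [MetricSpace X] :
    (Algebra.adjoin ℝ ((sepMonoid X : Set C(X × X, ℝ)))).SeparatesPoints := by
  intro p q hpq
  have : p.1 ≠ q.1 ∨ p.2 ≠ q.2 := by
    by_contra hc
    push_neg at hc
    exact hpq (Prod.ext hc.1 hc.2)
  rcases this with h1 | h2
  · refine ⟨_, ⟨(ContinuousMap.mk (fun x => dist x p.1) (by fun_prop)).comp ContinuousMap.fst,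
      Algebra.subset_adjoin ⟨ContinuousMap.mk (fun x => dist x p.1) (by fun_prop), 1, by
        ext r; simp [ContinuousMap.comp]⟩, rfl⟩, ?_⟩
    simp only [ContinuousMap.comp_apply, ContinuousMap.coe_mk, ContinuousMap.fst_apply]
    simp only [dist_self]
    exact fun hh => h1 (by simpa [eq_comm, dist_eq_zero] using hh)
  · refine ⟨_, ⟨(ContinuousMap.mk (fun x => dist x p.2) (by fun_prop)).comp ContinuousMap.snd,
      Algebra.subset_adjoin ⟨1, ContinuousMap.mk (fun x => dist x p.2) (by fun_prop), by
        ext r; simp [ContinuousMap.comp]⟩, rfl⟩, ?_⟩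
    simp only [ContinuousMap.comp_apply, ContinuousMap.coe_mk, ContinuousMap.snd_apply]
    simp only [dist_self]
    exact fun hh => h2 (by simpa [eq_comm, dist_eq_zero] using hh)

lemma sep_approx (f : X × X → ℝ) (hf : Continuous f) {ε : ℝ} (hε : 0 < ε) :
    ∃ h : C(X × X, ℝ),
      Continuous (fun σ : ProbabilityMeasure X =>
        ∫ p, h p ∂((σ : Measure X).prod (σ : Measure X))) ∧ ∀ p, |h p - f p| < ε := by
  obtain ⟨⟨g, hg⟩, hnear⟩ :=
    ContinuousMap.exists_mem_subalgebra_near_continuous_of_separatesPoints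
      (Algebra.adjoin ℝ ((sepMonoid X : Set C(X × X, ℝ)))) (sepMonoid_separates X) f hf ε hε
  refine ⟨g, cont_int_of_mem_span g ?_, fun p => by simpa using hnear p⟩
  have := Algebra.adjoin_eq_span (R := ℝ) (s := ((sepMonoid X : Set C(X × X, ℝ))))
  rw [Submonoid.closure_eq] at this
  rw [← Subalgebra.mem_toSubmodule, this] at hg
  exact hg

def gker (K : Set ℂ) (n : ℕ) (p : ↥K × ↥K) : ℝ :=
  -Real.log (max (‖((p.1 : ℂ) - (p.2 : ℂ))‖) (Real.exp (-(n : ℝ))))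

lemma gker_continuous (K : Set ℂ) (n : ℕ) : Continuous (gker K n) := by
  apply Continuous.neg
  apply Continuous.log
  · exact ((continuous_norm.comp ((continuous_subtype_val.comp continuous_fst).sub
      (continuous_subtype_val.comp continuous_snd))).max continuous_const)
  · intro p
    have : (0:ℝ) < max (‖((p.1 : ℂ) - (p.2 : ℂ))‖) (Real.exp (-(n : ℝ))) :=
      lt_max_of_lt_right (Real.exp_pos _)
    exact ne_of_gt this

def TgK (K : Set ℂ) (n : ℕ) (σ : ProbabilityMeasure ↥K) : ℝ :=
  ∫ p, gker K n p ∂((σ : Measure ↥K).prod (σ : Measure ↥K))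

lemma exists_open_T (K : Set ℂ) (hK : IsCompact K) (n : ℕ) (μ : ProbabilityMeasure ↥K)
    {δ : ℝ} (hδ : 0 < δ) :
    ∃ G : Set (ProbabilityMeasure ↥K), IsOpen G ∧ μ ∈ G ∧
      ∀ σ ∈ G, TgK K n μ - δ < TgK K n σ := by
  haveI : CompactSpace ↥K := isCompact_iff_compactSpace.mp hK
  obtain ⟨h, hcont, happrox⟩ := sep_approx (gker K n) (gker_continuous K n)
    (by positivity : (0:ℝ) < δ/4)
  set Th : ProbabilityMeasure ↥K → ℝ := fun σ =>
    ∫ p, h p ∂((σ : Measure ↥K).prod (σ : Measure ↥K)) with hTh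
  have key : ∀ τ : ProbabilityMeasure ↥K, |Th τ - TgK K n τ| ≤ δ/4 := by
    intro τ
    have hint1 : Integrable h ((τ : Measure ↥K).prod (τ : Measure ↥K)) :=
      (mkOfCompact h).integrable _
    have hint2 : Integrable (gker K n) ((τ : Measure ↥K).prod (τ : Measure ↥K)) :=
      (mkOfCompact (ContinuousMap.mk _ (gker_continuous K n))).integrable _
    have : Th τ - TgK K n τ = ∫ p, (h p - gker K n p)
        ∂((τ : Measure ↥K).prod (τ : Measure ↥K)) := (integral_sub hint1 hint2).symm
    rw [this, ← Real.norm_eq_abs]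
    calc ‖∫ p, (h p - gker K n p) ∂((τ : Measure ↥K).prod (τ : Measure ↥K))‖
        ≤ (δ/4) * (((τ : Measure ↥K).prod (τ : Measure ↥K)) Set.univ).toReal :=
          norm_integral_le_of_norm_le_const
            (Filter.Eventually.of_forall fun p => le_of_lt (by simpa using (happrox p)))
      _ = δ/4 := by simp
  refine ⟨Th ⁻¹' Set.Ioi (Th μ - δ/2), hcont.isOpen_preimage _ isOpen_Ioi, by
    simp only [Set.mem_preimage, Set.mem_Ioi]; linarith, ?_⟩
  intro σ hσ
  simp only [Set.mem_preimage, Set.mem_Ioi] at hσ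
  have k1 := key σ
  have k2 := key μ
  rw [abs_le] at k1 k2
  linarith [k1.1, k1.2, k2.1, k2.2]

end AuxSW

section AuxEmp
open BoundedContinuousFunction

variable {K : Set ℂ}

lemma integral_emp1 [CompactSpace ↥K] {k : ℕ} (x : Fin (k + 1) → ↥K)
    (f : ↥K → ℝ) (hf : Continuous f) :
    ∫ z, f z ∂(emp1 x) = (∑ i, f (x i)) / ((k : ℝ) + 1) := by
  have hint : ∀ β : Fin (k + 1), Integrable f (Measure.dirac (x β)) := fun β =>
    (mkOfCompact (ContinuousMap.mk f hf)).integrable _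
  rw [emp1, integral_smul_measure, integral_finset_sum_measure (fun β _ => hint β)]
  simp only [integral_dirac]
  rw [smul_eq_mul]
  have : (((k + 1 : ℕ) : ℝ≥0∞)⁻¹).toReal = ((k : ℝ) + 1)⁻¹ := by
    rw [ENNReal.toReal_inv, ENNReal.toReal_natCast]
    push_cast
    ring
  rw [this, inv_mul_eq_div]

lemma TgK_emp (hK : IsCompact K) (n : ℕ) {k : ℕ} (x : Fin (k + 1) → ↥K) :
    TgK K n (empP1 x) = (∑ i, ∑ j, gker K n (x i, x j)) / ((k : ℝ) + 1) ^ 2 := by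
  haveI : CompactSpace ↥K := isCompact_iff_compactSpace.mp hK
  haveI : IsProbabilityMeasure (emp1 x) := emp1_isProb x
  have hcoe : (empP1 x : Measure ↥K) = emp1 x := rfl
  have hint : Integrable (gker K n) ((emp1 x).prod (emp1 x)) :=
    (mkOfCompact (ContinuousMap.mk _ (gker_continuous K n))).integrable _
  rw [TgK, hcoe, MeasureTheory.integral_prod _ hint]
  have inner : ∀ z : ↥K, (∫ w, gker K n (z, w) ∂(emp1 x))
      = (∑ j, gker K n (z, x j)) / ((k : ℝ) + 1) := by
    intro z
    exact integral_emp1 x _ ((gker_continuous K n).comp (Continuous.prodMk_right z))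
  simp only [inner]
  rw [integral_emp1 x _ (by
    apply Continuous.div_const
    apply continuous_finset_sum
    intro j _
    exact (gker_continuous K n).comp (continuous_id.prodMk continuous_const))]
  rw [← Finset.sum_div, div_div, sq]
end AuxEmp


section AuxVdm
variable {K : Set ℂ}

lemma gker_diag (n : ℕ) (a : ↥K) : gker K n (a, a) = n := by
  simp only [gker, sub_self, norm_zero]
  rw [max_eq_right (Real.exp_pos _).le, Real.log_exp, neg_neg]

lemma gker_le (n : ℕ) {a b : ↥K} (hab : a ≠ b) :
    gker K n (a, b) ≤ -Real.log (‖((b : ℂ) - (a : ℂ))‖) := by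
  have h0 : (a : ℂ) ≠ (b : ℂ) := fun h => hab (Subtype.ext h)
  have hpos : 0 < ‖((a : ℂ) - (b : ℂ))‖ := by
    rw [norm_pos_iff]; exact sub_ne_zero.mpr h0
  have habs : ‖((b : ℂ) - (a : ℂ))‖ = ‖((a : ℂ) - (b : ℂ))‖ :=
    norm_sub_rev _ _
  rw [habs, gker]
  exact neg_le_neg (Real.log_le_log hpos (le_max_left _ _))

lemma vdm_le (hK : IsCompact K) (n : ℕ) {k : ℕ} (x : Fin (k + 1) → ↥K) :
    absVdm1 k x ≤
      Real.exp ((((k : ℝ) + 1) * n - ((k : ℝ) + 1) ^ 2 * TgK K n (empP1 x)) / 2) := by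
  set F : Fin (k + 1) → Fin (k + 1) → ℝ := fun a b => gker K n (x a, x b) with hF
  have hS : ((k : ℝ) + 1) ^ 2 * TgK K n (empP1 x) = ∑ i, ∑ j, F i j := by
    rw [TgK_emp hK n x]
    field_simp
    rfl
  by_cases hinj : Function.Injective x
  · have hfac : ∀ i : Fin (k + 1), ∀ j ∈ Finset.Ioi i,
        0 < ‖((x j : ℂ) - (x i : ℂ))‖ := by
      intro i j hj
      rw [norm_pos_iff, sub_ne_zero]
      exact fun h => (Finset.mem_Ioi.mp hj).ne' (hinj (Subtype.ext h))
    have hprodpos : 0 < absVdm1 k x :=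
      Finset.prod_pos fun i _ => Finset.prod_pos fun j hj => hfac i j hj
    rw [← Real.exp_log hprodpos]
    apply Real.exp_le_exp.mpr
    have hlog : Real.log (absVdm1 k x)
        = ∑ i, ∑ j ∈ Finset.Ioi i, Real.log (‖((x j : ℂ) - (x i : ℂ))‖) := by
      rw [absVdm1, Real.log_prod
        (fun i _ => (Finset.prod_pos fun j hj => hfac i j hj).ne')]
      exact Finset.sum_congr rfl fun i _ => Real.log_prod fun j hj => (hfac i j hj).ne'
    rw [hlog]
    have step1 : ∑ i, ∑ j ∈ Finset.Ioi i, Real.log (‖((x j : ℂ) - (x i : ℂ))‖)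
        ≤ ∑ i, ∑ j ∈ Finset.Ioi i, (-(F j i + F i j) / 2) := by
      refine Finset.sum_le_sum fun i _ => Finset.sum_le_sum fun j hj => ?_
      have hij : i < j := Finset.mem_Ioi.mp hj
      have hne : x i ≠ x j := fun h => hij.ne (hinj h)
      have h1 : F i j ≤ -Real.log (‖((x j : ℂ) - (x i : ℂ))‖) := gker_le n hne
      have h2 : F j i ≤ -Real.log (‖((x i : ℂ) - (x j : ℂ))‖) := gker_le n hne.symm
      have habs : ‖((x i : ℂ) - (x j : ℂ))‖
          = ‖((x j : ℂ) - (x i : ℂ))‖ := norm_sub_rev _ _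
      rw [habs] at h2
      linarith
    refine step1.trans ?_
    have hoff : ∑ i, ∑ j ∈ Finset.Ioi i, (F j i + F i j)
        = ∑ i, ∑ j ∈ ({i}ᶜ : Finset _), F j i := by
      convert Finset.sum_sum_Ioi_add_eq_sum_sum_off_diag F
    have hcompl : ∀ i : Fin (k + 1),
        ∑ j ∈ ({i}ᶜ : Finset _), F j i = (∑ j, F j i) - F i i := by
      intro i
      have := Finset.sum_compl_add_sum ({i} : Finset (Fin (k + 1))) (fun j => F j i)
      simp only [Finset.sum_singleton] at this
      linarith
    have hdiag : ∀ i : Fin (k + 1), F i i = n := fun i => gker_diag n (x i)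
    have hsum : ∑ i, ∑ j ∈ Finset.Ioi i, (F j i + F i j)
        = (∑ i, ∑ j, F i j) - ((k : ℝ) + 1) * n := by
      rw [hoff]
      have : ∀ i : Fin (k + 1), ∑ j ∈ ({i}ᶜ : Finset _), F j i = (∑ j, F j i) - (n : ℝ) := by
        intro i; rw [hcompl i, hdiag i]
      simp only [this]
      rw [Finset.sum_sub_distrib, Finset.sum_comm]
      simp only [Finset.sum_const, Finset.card_univ, Fintype.card_fin, nsmul_eq_mul]
      push_cast
      ring
    have hsum2 : ∑ i, ∑ j ∈ Finset.Ioi i, (-(F j i + F i j) / 2)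
        = -((∑ i, ∑ j ∈ Finset.Ioi i, (F j i + F i j))) / 2 := by
      simp only [neg_div, Finset.sum_neg_distrib, Finset.sum_div]
    rw [hsum2, hsum, hS]
    linarith
  · rw [Function.not_injective_iff] at hinj
    obtain ⟨i, j, heq, hne⟩ := hinj
    have hzero : absVdm1 k x = 0 := by
      rcases hne.lt_or_gt with hlt | hlt
      · apply Finset.prod_eq_zero (Finset.mem_univ i)
        apply Finset.prod_eq_zero (Finset.mem_Ioi.mpr hlt)
        rw [heq, sub_self, norm_zero]
      · apply Finset.prod_eq_zero (Finset.mem_univ j)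
        apply Finset.prod_eq_zero (Finset.mem_Ioi.mpr hlt)
        rw [heq, sub_self, norm_zero]
    rw [hzero]
    exact (Real.exp_pos _).le
end AuxVdm


section AuxWk
variable {K : Set ℂ}

lemma absVdm1_nonneg (k : ℕ) (x : Fin (k + 1) → ↥K) : 0 ≤ absVdm1 k x :=
  Finset.prod_nonneg fun i _ => Finset.prod_nonneg fun j _ => (norm_nonneg _)

lemma absVdm1W_zeroQ (k : ℕ) (x : Fin (k + 1) → ↥K) :
    absVdm1W k (fun _ => 0) x = absVdm1 k x := by
  simp [absVdm1W]

lemma Wk1_nonneg (k : ℕ) (Q : ↥K → ℝ) (G : Set (ProbabilityMeasure ↥K)) :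
    0 ≤ Wk1 k Q G := by
  apply Real.sSup_nonneg
  rintro y ⟨x, _, rfl⟩
  apply Real.rpow_nonneg
  exact mul_nonneg (absVdm1_nonneg k x) (Finset.prod_nonneg fun β _ => (Real.exp_pos _).le)

lemma exists_Wk1_bound (hK : IsCompact K) :
    ∃ C : ℝ, 1 ≤ C ∧ ∀ (G : Set (ProbabilityMeasure ↥K)) (k : ℕ),
      Wk1 k (fun _ => 0) G ≤ C := by
  obtain ⟨r, hr⟩ := hK.isBounded.subset_closedBall 0
  refine ⟨max 1 (2 * r), le_max_left _ _, fun G k => ?_⟩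
  set C := max 1 (2 * r) with hC
  have hC1 : (1 : ℝ) ≤ C := le_max_left _ _
  have hC0 : (0 : ℝ) ≤ C := zero_le_one.trans hC1
  have habs : ∀ a b : ↥K, ‖((a : ℂ) - (b : ℂ))‖ ≤ C := by
    intro a b
    have ha := hr a.2
    have hb := hr b.2
    simp only [Metric.mem_closedBall, Complex.dist_eq, sub_zero] at ha hb
    calc ‖((a : ℂ) - (b : ℂ))‖ ≤ ‖(a : ℂ)‖ + ‖(b : ℂ)‖ :=
          norm_sub_le _ _
      _ ≤ 2 * r := by linarith
      _ ≤ C := le_max_right _ _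
  rcases Nat.eq_zero_or_pos k with hk | hk
  · subst hk
    apply Real.sSup_le _ hC0
    rintro y ⟨x, _, rfl⟩
    norm_num
    exact hC1
  · apply Real.sSup_le _ hC0
    rintro y ⟨x, _, rfl⟩
    simp only [absVdm1W_zeroQ]
    set m : ℕ := k * (k + 1) with hm
    have hm0 : 0 < m := Nat.mul_pos hk k.succ_pos
    have hbound : absVdm1 k x ≤ C ^ m := by
      calc absVdm1 k x ≤ ∏ i : Fin (k + 1), ∏ j ∈ Finset.Ioi i, C := by
            apply Finset.prod_le_prod
              (fun i _ => Finset.prod_nonneg fun j _ => (norm_nonneg _))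
            intro i _
            exact Finset.prod_le_prod (fun j _ => (norm_nonneg _))
              (fun j _ => habs _ _)
        _ = ∏ i : Fin (k + 1), C ^ (Finset.Ioi i).card := by
            simp [Finset.prod_const]
        _ = C ^ (∑ i : Fin (k + 1), (Finset.Ioi i).card) := by
            rw [Finset.prod_pow_eq_pow_sum]
        _ ≤ C ^ m := by
            apply pow_le_pow_right₀ hC1
            calc ∑ i : Fin (k + 1), (Finset.Ioi i).card
                ≤ ∑ _i : Fin (k + 1), k := by
                  apply Finset.sum_le_sum
                  intro i _
                  rw [Fin.card_Ioi]
                  omega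
              _ = (k + 1) * k := by simp [Finset.sum_const, mul_comm]
              _ ≤ m := by rw [hm, Nat.mul_comm]
    have hexp : ((1 : ℝ) / ((m : ℕ) : ℝ)) = (m : ℝ)⁻¹ := one_div _
    calc (absVdm1 k x) ^ ((1 : ℝ) / ((m : ℕ) : ℝ))
        ≤ (C ^ m) ^ ((1 : ℝ) / ((m : ℕ) : ℝ)) :=
          Real.rpow_le_rpow (absVdm1_nonneg k x) hbound (by positivity)
      _ = C := by
          rw [← Real.rpow_natCast C m, ← Real.rpow_mul hC0]
          rw [mul_one_div, div_self (by exact_mod_cast hm0.ne' : ((m : ℕ) : ℝ) ≠ 0)]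
          exact Real.rpow_one C
end AuxWk


section AuxMain
variable {K : Set ℂ}

lemma Wk1_le_exp (hK : IsCompact K) (n : ℕ) {k : ℕ} (hk : 1 ≤ k) (t : ℝ)
    (G : Set (ProbabilityMeasure ↥K)) (hG : ∀ σ ∈ G, t < TgK K n σ) :
    Wk1 k (fun _ => 0) G ≤ Real.exp (((n : ℝ) - ((k : ℝ) + 1) * t) / (2 * k)) := by
  apply Real.sSup_le _ (Real.exp_pos _).le
  rintro y ⟨x, hx, rfl⟩
  simp only [absVdm1W_zeroQ]
  have hk0 : ((k : ℝ)) ≠ 0 := by positivity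
  have hcast : ((k * (k + 1) : ℕ) : ℝ) = (k : ℝ) * ((k : ℝ) + 1) := by push_cast; ring
  have hrpos : 0 < (1 : ℝ) / ((k * (k + 1) : ℕ) : ℝ) := by
    rw [hcast]; positivity
  have hT : t < TgK K n (empP1 x) := hG _ hx
  calc absVdm1 k x ^ ((1 : ℝ) / ((k * (k + 1) : ℕ) : ℝ))
      ≤ (Real.exp ((((k : ℝ) + 1) * n - ((k : ℝ) + 1) ^ 2 * TgK K n (empP1 x)) / 2))
          ^ ((1 : ℝ) / ((k * (k + 1) : ℕ) : ℝ)) :=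
        Real.rpow_le_rpow (absVdm1_nonneg k x) (vdm_le hK n x) hrpos.le
    _ = Real.exp (((((k : ℝ) + 1) * n - ((k : ℝ) + 1) ^ 2 * TgK K n (empP1 x)) / 2)
          * ((1 : ℝ) / ((k * (k + 1) : ℕ) : ℝ))) := (Real.exp_mul _ _).symm
    _ ≤ Real.exp (((n : ℝ) - ((k : ℝ) + 1) * t) / (2 * k)) := by
        apply Real.exp_le_exp.mpr
        rw [hcast]
        rw [div_mul_div_comm, mul_one]
        rw [div_le_div_iff₀ (by positivity) (by positivity)]
        have hkpos : (0 : ℝ) < (k : ℝ) := by positivity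
        have hmul := mul_lt_mul_of_pos_left hT
          (show (0:ℝ) < 2 * (k : ℝ) * ((k : ℝ) + 1) ^ 2 by positivity)
        nlinarith [hmul]

lemma Wk1_limsup_nonneg (hK : IsCompact K) (G : Set (ProbabilityMeasure ↥K)) :
    0 ≤ Filter.limsup (fun k : ℕ => Wk1 k (fun _ => 0) G) atTop := by
  obtain ⟨C, hC1, hC⟩ := exists_Wk1_bound hK
  apply Filter.le_limsup_of_frequently_le
  · exact Filter.Frequently.of_forall fun k => Wk1_nonneg k _ G
  · exact Filter.isBoundedUnder_of ⟨C, fun k => hC G k⟩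

lemma Wbar1_le_limsup (hK : IsCompact K) (μ : ProbabilityMeasure ↥K)
    (G : Set (ProbabilityMeasure ↥K)) (hopen : IsOpen G) (hmem : μ ∈ G) :
    Wbar1 μ ≤ Filter.limsup (fun k : ℕ => Wk1 k (fun _ => 0) G) atTop := by
  exact ciInf_le ⟨0, by rintro y ⟨i, rfl⟩; exact Wk1_limsup_nonneg hK i.1⟩
    (⟨G, hopen, hmem⟩ : {G : Set (ProbabilityMeasure ↥K) // IsOpen G ∧ μ ∈ G})

lemma Wbar1_nonneg (hK : IsCompact K) (μ : ProbabilityMeasure ↥K) : 0 ≤ Wbar1 μ := by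
  haveI : Nonempty {G : Set (ProbabilityMeasure ↥K) // IsOpen G ∧ μ ∈ G} :=
    ⟨⟨Set.univ, isOpen_univ, trivial⟩⟩
  exact le_ciInf fun G => Wk1_limsup_nonneg hK G.1

lemma Wbar1_le_exp (hK : IsCompact K) (μ : ProbabilityMeasure ↥K) (n : ℕ)
    {δ : ℝ} (hδ : 0 < δ) :
    Wbar1 μ ≤ Real.exp (-(TgK K n μ - δ) / 2) := by
  obtain ⟨G, hopen, hmem, hG⟩ := exists_open_T K hK n μ hδ
  set t : ℝ := TgK K n μ - δ with ht
  have hb : Tendsto (fun k : ℕ => Real.exp (((n : ℝ) - ((k : ℝ) + 1) * t) / (2 * k)))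
      atTop (𝓝 (Real.exp (-t / 2))) := by
    apply Real.continuous_exp.continuousAt.tendsto.comp
    have heq : ∀ᶠ k : ℕ in atTop, ((n : ℝ) - t) / 2 * (1 / (k : ℝ)) + -t / 2
        = ((n : ℝ) - ((k : ℝ) + 1) * t) / (2 * k) := by
      filter_upwards [Filter.eventually_ge_atTop 1] with k hk
      have hk0 : ((k : ℝ)) ≠ 0 := by
        simp only [ne_eq, Nat.cast_eq_zero]; omega
      field_simp
      ring
    apply Filter.Tendsto.congr' heq
    have h1 : Tendsto (fun k : ℕ => ((n : ℝ) - t) / 2 * (1 / (k : ℝ)) + -t / 2) atTop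
        (𝓝 (((n : ℝ) - t) / 2 * 0 + -t / 2)) :=
      (tendsto_one_div_atTop_nhds_zero_nat.const_mul _).add_const _
    simpa using h1
  calc Wbar1 μ ≤ Filter.limsup (fun k : ℕ => Wk1 k (fun _ => 0) G) atTop :=
        Wbar1_le_limsup hK μ G hopen hmem
    _ ≤ Filter.limsup (fun k : ℕ => Real.exp (((n : ℝ) - ((k : ℝ) + 1) * t) / (2 * k)))
          atTop := by
        apply Filter.limsup_le_limsup
        · filter_upwards [Filter.eventually_ge_atTop 1] with k hk
          exact Wk1_le_exp hK n hk t G hG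
        · exact Filter.isCoboundedUnder_le_of_le atTop fun k => Wk1_nonneg k _ G
        · exact hb.isBoundedUnder_le
    _ = Real.exp (-t / 2) := hb.limsup_eq

lemma Wbar1_le_exp' (hK : IsCompact K) (μ : ProbabilityMeasure ↥K) (n : ℕ) :
    Wbar1 μ ≤ Real.exp (-TgK K n μ / 2) := by
  have h : ∀ m : ℕ, Wbar1 μ ≤ Real.exp (-(TgK K n μ - 1 / ((m : ℝ) + 1)) / 2) :=
    fun m => Wbar1_le_exp hK μ n (by positivity)
  have hlim : Tendsto (fun m : ℕ => Real.exp (-(TgK K n μ - 1 / ((m : ℝ) + 1)) / 2)) atTop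
      (𝓝 (Real.exp (-(TgK K n μ - 0) / 2))) := by
    apply Real.continuous_exp.continuousAt.tendsto.comp
    apply Filter.Tendsto.div_const
    apply Filter.Tendsto.neg
    exact (tendsto_const_nhds.sub tendsto_one_div_add_atTop_nhds_zero_nat)
  have := ge_of_tendsto' hlim h
  simpa using this
end AuxMain


section AuxEnergy
variable {K : Set ℂ}

lemma logKer_eq (z w : ℂ) : logKer z w = -Real.log (‖(z - w)‖) := by
  rw [logKer, one_div, Real.log_inv]

lemma gker_le_n (n : ℕ) (p : ↥K × ↥K) : gker K n p ≤ n := by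
  rw [gker]
  have h1 : Real.log (Real.exp (-(n : ℝ)))
      ≤ Real.log (max (‖((p.1 : ℂ) - (p.2 : ℂ))‖) (Real.exp (-(n : ℝ)))) :=
    Real.log_le_log (Real.exp_pos _) (le_max_right _ _)
  rw [Real.log_exp] at h1
  linarith

lemma gker_mono (p : ↥K × ↥K) :
    Monotone fun n : ℕ => gker K n p := by
  intro n m hnm
  simp only [gker]
  have hmax : max (‖((p.1 : ℂ) - (p.2 : ℂ))‖) (Real.exp (-(m : ℝ)))
      ≤ max (‖((p.1 : ℂ) - (p.2 : ℂ))‖) (Real.exp (-(n : ℝ))) := by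
    apply max_le_max le_rfl
    apply Real.exp_le_exp.mpr
    simp only [neg_le_neg_iff, Nat.cast_le]
    exact hnm
  apply neg_le_neg
  apply Real.log_le_log (lt_max_of_lt_right (Real.exp_pos _)) hmax

lemma negpart_gker_eq (n : ℕ) (p : ↥K × ↥K) :
    ENNReal.ofReal (-gker K n p) = ENNReal.ofReal (-logKer (p.1 : ℂ) (p.2 : ℂ)) := by
  rw [logKer_eq, neg_neg, gker, neg_neg]
  set d := ‖((p.1 : ℂ) - (p.2 : ℂ))‖ with hd
  have hd0 : 0 ≤ d := norm_nonneg _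
  have he1 : Real.exp (-(n : ℝ)) ≤ 1 := by
    rw [show (1:ℝ) = Real.exp 0 by simp]
    apply Real.exp_le_exp.mpr
    simp
  rcases le_or_gt (Real.exp (-(n : ℝ))) d with h | h
  · rw [max_eq_left h]
  · rw [max_eq_right h.le]
    have h2 : Real.log (Real.exp (-(n : ℝ))) ≤ 0 :=
      Real.log_nonpos (Real.exp_pos _).le he1
    rw [ENNReal.ofReal_eq_zero.mpr h2]
    symm
    rw [ENNReal.ofReal_eq_zero]
    rcases eq_or_lt_of_le hd0 with h0 | h0
    · rw [← h0]
      simp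
    · have : Real.log d ≤ Real.log (Real.exp (-(n : ℝ))) :=
        Real.log_le_log h0 h.le
      linarith
lemma iSup_gker_eq_posKer (p : ↥K × ↥K) :
    ⨆ n : ℕ, ENNReal.ofReal (gker K n p) = posKer (p.1 : ℂ) (p.2 : ℂ) := by
  by_cases h : (p.1 : ℂ) = (p.2 : ℂ)
  · rw [posKer, if_pos h]
    have hg : ∀ n : ℕ, gker K n p = n := by
      intro n
      rw [gker, h, sub_self, norm_zero, max_eq_right (Real.exp_pos _).le, Real.log_exp, neg_neg]
    simp only [hg]
    simp only [ENNReal.ofReal_natCast]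
    exact ENNReal.iSup_natCast
  · rw [posKer, if_neg h, logKer_eq]
    set d := ‖((p.1 : ℂ) - (p.2 : ℂ))‖ with hd
    have hd0 : 0 < d := by
      rw [hd, norm_pos_iff]
      exact sub_ne_zero.mpr h
    apply le_antisymm
    · apply iSup_le
      intro n
      apply ENNReal.ofReal_le_ofReal
      apply neg_le_neg
      exact Real.log_le_log hd0 (le_max_left _ _)
    · obtain ⟨n, hn⟩ := exists_nat_ge (-Real.log d)
      have hexp : Real.exp (-(n : ℝ)) ≤ d := by
        rw [← Real.exp_log hd0]
        apply Real.exp_le_exp.mpr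
        linarith
      have : ENNReal.ofReal (gker K n p) = ENNReal.ofReal (-Real.log d) := by
        rw [gker, ← hd, max_eq_left hexp]
      rw [← this]
      exact le_iSup (fun n : ℕ => ENNReal.ofReal (gker K n p)) n

lemma negpart_finite (hK : IsCompact K) (μ : ProbabilityMeasure ↥K) :
    (∫⁻ p : ↥K × ↥K, ENNReal.ofReal (-logKer (p.1 : ℂ) (p.2 : ℂ))
      ∂((μ : Measure ↥K).prod (μ : Measure ↥K))) ≠ ⊤ := by
  obtain ⟨r, hr⟩ := hK.isBounded.subset_closedBall 0
  set C := max 1 (2 * r) with hC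
  have hC1 : (1 : ℝ) ≤ C := le_max_left _ _
  have hbound : ∀ p : ↥K × ↥K,
      ENNReal.ofReal (-logKer (p.1 : ℂ) (p.2 : ℂ)) ≤ ENNReal.ofReal (Real.log C) := by
    intro p
    rw [logKer_eq, neg_neg]
    apply ENNReal.ofReal_le_ofReal
    have habs : ‖((p.1 : ℂ) - (p.2 : ℂ))‖ ≤ C := by
      have ha := hr p.1.2
      have hb := hr p.2.2
      simp only [Metric.mem_closedBall, Complex.dist_eq, sub_zero] at ha hb
      calc ‖((p.1 : ℂ) - (p.2 : ℂ))‖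
          ≤ ‖(p.1 : ℂ)‖ + ‖(p.2 : ℂ)‖ := norm_sub_le _ _
        _ ≤ 2 * r := by linarith
        _ ≤ C := le_max_right _ _
    rcases eq_or_lt_of_le (norm_nonneg ((p.1 : ℂ) - (p.2 : ℂ))) with h0 | h0
    · rw [← h0]
      simp only [Real.log_zero]
      exact Real.log_nonneg hC1
    · exact Real.log_le_log h0 habs
  apply ne_of_lt
  calc (∫⁻ p : ↥K × ↥K, ENNReal.ofReal (-logKer (p.1 : ℂ) (p.2 : ℂ))
        ∂((μ : Measure ↥K).prod (μ : Measure ↥K)))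
      ≤ ∫⁻ _p : ↥K × ↥K, ENNReal.ofReal (Real.log C)
        ∂((μ : Measure ↥K).prod (μ : Measure ↥K)) := lintegral_mono hbound
    _ = ENNReal.ofReal (Real.log C) := by
        rw [lintegral_const, measure_univ, mul_one]
    _ < ⊤ := ENNReal.ofReal_lt_top

lemma TgK_decomp (hK : IsCompact K) (μ : ProbabilityMeasure ↥K) (n : ℕ) :
    TgK K n μ = (∫⁻ p : ↥K × ↥K, ENNReal.ofReal (gker K n p)
        ∂((μ : Measure ↥K).prod (μ : Measure ↥K))).toReal
      - (∫⁻ p : ↥K × ↥K, ENNReal.ofReal (-logKer (p.1 : ℂ) (p.2 : ℂ))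
        ∂((μ : Measure ↥K).prod (μ : Measure ↥K))).toReal := by
  haveI : CompactSpace ↥K := isCompact_iff_compactSpace.mp hK
  have hint : Integrable (gker K n) ((μ : Measure ↥K).prod (μ : Measure ↥K)) :=
    (BoundedContinuousFunction.mkOfCompact
      (ContinuousMap.mk _ (gker_continuous K n))).integrable _
  rw [TgK, MeasureTheory.integral_eq_lintegral_pos_part_sub_lintegral_neg_part hint]
  congr 1
  apply congrArg
  exact lintegral_congr fun p => negpart_gker_eq n p

lemma pospart_eq_iSup (hK : IsCompact K) (μ : ProbabilityMeasure ↥K) :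
    (∫⁻ p : ↥K × ↥K, posKer (p.1 : ℂ) (p.2 : ℂ)
        ∂((μ : Measure ↥K).prod (μ : Measure ↥K)))
      = ⨆ n : ℕ, ∫⁻ p : ↥K × ↥K, ENNReal.ofReal (gker K n p)
        ∂((μ : Measure ↥K).prod (μ : Measure ↥K)) := by
  rw [← MeasureTheory.lintegral_iSup]
  · exact lintegral_congr fun p => (iSup_gker_eq_posKer p).symm
  · intro n
    exact ((gker_continuous K n).measurable).ennreal_ofReal
  · intro n m hnm
    exact fun p => ENNReal.ofReal_le_ofReal (gker_mono p hnm)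

lemma pospart_n_finite (hK : IsCompact K) (μ : ProbabilityMeasure ↥K) (n : ℕ) :
    (∫⁻ p : ↥K × ↥K, ENNReal.ofReal (gker K n p)
        ∂((μ : Measure ↥K).prod (μ : Measure ↥K))) ≠ ⊤ := by
  apply ne_of_lt
  calc (∫⁻ p : ↥K × ↥K, ENNReal.ofReal (gker K n p)
        ∂((μ : Measure ↥K).prod (μ : Measure ↥K)))
      ≤ ∫⁻ _p : ↥K × ↥K, ENNReal.ofReal (n : ℝ)
        ∂((μ : Measure ↥K).prod (μ : Measure ↥K)) :=
        lintegral_mono fun p => ENNReal.ofReal_le_ofReal (gker_le_n n p)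
    _ = ENNReal.ofReal (n : ℝ) := by rw [lintegral_const, measure_univ, mul_one]
    _ < ⊤ := ENNReal.ofReal_lt_top
end AuxEnergy


/-- From the proof of Proposition 6.2 (cf. Theorem 4.1(a) of Bloom's paper): for any compact
`K ⊂ ℂ` and `μ ∈ ℳ(K)`, `log W̄(μ) ≤ -(1/2) I(μ)`; in particular `I(μ) = +∞ ⟹ W̄(μ) = 0`. -/
theorem stmt18 (K : Set ℂ) (hK : IsCompact K) (μ : ProbabilityMeasure ↥K) :
    elog (Wbar1 μ) ≤ -(((1 / 2 : ℝ) : EReal) * energyE (μ : Measure ↥K)) ∧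
    (energyE (μ : Measure ↥K) = ⊤ → Wbar1 μ = 0) := by
  have h0 : 0 ≤ Wbar1 μ := Wbar1_nonneg hK μ
  by_cases hzero : Wbar1 μ = 0
  · refine ⟨?_, fun _ => hzero⟩
    rw [hzero]
    simp only [elog, if_pos le_rfl]
    exact bot_le
  · have hpos : 0 < Wbar1 μ := lt_of_le_of_ne h0 (Ne.symm hzero)
    set B : ℝ≥0∞ := ∫⁻ p : ↥K × ↥K, ENNReal.ofReal (-logKer (p.1 : ℂ) (p.2 : ℂ))
      ∂((μ : Measure ↥K).prod (μ : Measure ↥K)) with hB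
    set A : ℝ≥0∞ := ∫⁻ p : ↥K × ↥K, posKer (p.1 : ℂ) (p.2 : ℂ)
      ∂((μ : Measure ↥K).prod (μ : Measure ↥K)) with hA
    set An : ℕ → ℝ≥0∞ := fun n => ∫⁻ p : ↥K × ↥K, ENNReal.ofReal (gker K n p)
      ∂((μ : Measure ↥K).prod (μ : Measure ↥K)) with hAn
    set c : ℝ := -2 * Real.log (Wbar1 μ) with hc
    have hFn : ∀ n : ℕ, TgK K n μ ≤ c := by
      intro n
      have h1 := Wbar1_le_exp' hK μ n
      have h2 : Real.log (Wbar1 μ) ≤ -TgK K n μ / 2 := by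
        calc Real.log (Wbar1 μ) ≤ Real.log (Real.exp (-TgK K n μ / 2)) :=
              Real.log_le_log hpos h1
          _ = -TgK K n μ / 2 := Real.log_exp _
      rw [hc]; linarith
    have hBfin : B ≠ ⊤ := negpart_finite hK μ
    have hAnfin : ∀ n, An n ≠ ⊤ := pospart_n_finite hK μ
    have hdecomp : ∀ n, TgK K n μ = (An n).toReal - B.toReal := TgK_decomp hK μ
    have hcB : 0 ≤ c + B.toReal := by
      have h1 := hdecomp 0
      have h2 := hFn 0
      have h3 : (0:ℝ) ≤ (An 0).toReal := ENNReal.toReal_nonneg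
      linarith
    have hAle : ∀ n, An n ≤ ENNReal.ofReal (c + B.toReal) := by
      intro n
      rw [← ENNReal.ofReal_toReal (hAnfin n)]
      apply ENNReal.ofReal_le_ofReal
      have h1 := hdecomp n
      have h2 := hFn n
      linarith
    have hAeq : A = ⨆ n, An n := pospart_eq_iSup hK μ
    have hAfin : A ≠ ⊤ := by
      rw [hAeq]
      exact ne_of_lt (lt_of_le_of_lt (iSup_le hAle) ENNReal.ofReal_lt_top)
    have hAle' : A.toReal ≤ c + B.toReal := by
      have h1 : A ≤ ENNReal.ofReal (c + B.toReal) := by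
        rw [hAeq]; exact iSup_le hAle
      exact ENNReal.toReal_le_of_le_ofReal hcB h1
    have cAB : ∀ x : ℝ≥0∞, x ≠ ⊤ → ((x.toReal : ℝ) : EReal) = (x : EReal) := by
      intro x hx
      rw [← EReal.toReal_coe_ennreal]
      exact EReal.coe_toReal (by simpa using hx) (EReal.coe_ennreal_ne_bot x)
    have hE : energyE (μ : Measure ↥K) = (((A.toReal - B.toReal : ℝ)) : EReal) := by
      rw [energyE, ← hB, ← hA, ← cAB A hAfin, ← cAB B hBfin, ← EReal.coe_sub]
    have he : A.toReal - B.toReal ≤ c := by linarith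
    constructor
    · rw [hE]
      have helog : elog (Wbar1 μ) = ((Real.log (Wbar1 μ) : ℝ) : EReal) := by
        rw [elog, if_neg (not_le.mpr hpos)]
      rw [helog]
      have hcoe : -(((1 / 2 : ℝ) : EReal) * (((A.toReal - B.toReal : ℝ)) : EReal))
          = (((-(1 / 2 * (A.toReal - B.toReal))) : ℝ) : EReal) := by
        rw [← EReal.coe_mul, ← EReal.coe_neg]
      rw [hcoe]
      apply EReal.coe_le_coe_iff.mpr
      rw [hc] at he
      linarith
    · intro htop
      rw [hE] at htop
      exact absurd htop (EReal.coe_ne_top _)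

end
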